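/- Let G be a locally compact group with left Haar measure μ_G and a proper, integer-valued length function 𝓛, with C^G_n := {g : 𝓛(g)=n}, and suppose the subgroup G₀ := {g : 𝓛(g)=0} is open. Let G act continuously on a compact Hausdorff space B, let ν be a quasi-invariant Borel probability measure with continuous Radon–Nikodym cocycle c : G × B → (0,∞), c(g,b) := (d((g⁻¹)_*ν)/dν)(b), satisfying the cocycle identity, and set Ξ(g) := ∫_B c(g⁻¹,b)^{1/2} dν(b). Let Λ be a discrete subgroup with C^Λ_n := {γ ∈ Λ : 𝓛(γ)=n}, and assume there is c₀ ∈ ℝ and m > 0 such that for all sufficiently large n, m·μ_G(C^G_n) ≤ c₀·|C^Λ_n|. Then there is a constant C such that for all sufficiently large n with C^Λ_n ≠ ∅ and 0 < μ_G(C^G_n) < ∞, and all b ∈ B: 0 ≤ (1/|C^Λ_n|) Σ_{γ∈C^Λ_n} c(γ⁻¹,b)^{1/2}/Ξ(γ) ≤ C · (1/μ_G(C^G_n)) ∫_{C^G_n} c(g⁻¹,b)^{1/2}/Ξ(g) dμ_G(g). -/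

import Mathlib

open MeasureTheory
open scoped ENNReal

namespace Stmt8

def IsLengthFun {G : Type*} [Group G] (L : G → ℝ) : Prop :=
  L 1 = 0 ∧ (∀ g, 0 ≤ L g) ∧ (∀ g, L g⁻¹ = L g) ∧ ∀ g h, L (g * h) ≤ L g + L h

end Stmt8

/-!
The level-zero set `G₀` of `𝓛` is a compact open subgroup and `𝓛` is constant on its left cosets.
Since `c` is bounded below by some `a > 0` on `G₀ × B`, the cocycle identity shows that
`φ_b(g) = c(g⁻¹,b)^{1/2} / Ξ(g)` satisfies `a φ_b(γ) ≤ φ_b(γk)` for `k ∈ G₀`, so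
`a μ(G₀) φ_b(γ) ≤ ∫_{γG₀} φ_b`. For `γ ∈ C^Λ_n` the cosets `γG₀` lie in `C^G_n` and cover each
point at most `|Λ ∩ G₀|` times, whence `a μ(G₀) Σ_{γ ∈ C^Λ_n} φ_b(γ) ≤ |Λ ∩ G₀| ∫_{C^G_n} φ_b`;
the growth hypothesis then trades `|C^Λ_n|⁻¹` for `c₀ / (m μ(C^G_n))`.
-/

open Set Topology Finset

theorem continuous_parametric_integral_of_compactSpace {X Y : Type*} [TopologicalSpace X]
    [TopologicalSpace Y] [CompactSpace Y] [MeasurableSpace Y] [BorelSpace Y]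
    (μ : Measure Y) [IsFiniteMeasure μ] {f : X → Y → ℝ} (hf : Continuous (Function.uncurry f)) :
    Continuous fun x => ∫ y, f x y ∂μ := by
  let F : C(X × Y, ℝ) := ⟨Function.uncurry f, hf⟩
  have hF : (fun x => ∫ y, f x y ∂μ) = fun x => ∫ y, ContinuousMap.toLp 1 μ ℝ (F.curry x) y ∂μ :=
    funext fun x => integral_congr_ae (ContinuousMap.coeFn_toLp μ (F.curry x)).symm
  rw [hF]
  exact continuous_integral.comp ((ContinuousMap.toLp 1 μ ℝ).continuous.comp F.curry.continuous)

theorem sum_setIntegral_le_mul_setIntegral_of_card_le {α ι : Type*} [MeasurableSpace α]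
    {μ : Measure α} {f : α → ℝ} {S : ι → Set α} {T : Set α} {s : Finset ι} {M : ℕ}
    [∀ x i, Decidable (x ∈ S i)]
    (hS : ∀ i ∈ s, MeasurableSet (S i)) (hT : MeasurableSet T) (hST : ∀ i ∈ s, S i ⊆ T)
    (hcard : ∀ x, #{i ∈ s | x ∈ S i} ≤ M) (hf : ∀ x ∈ T, 0 ≤ f x) (hfi : IntegrableOn f T μ) :
    ∑ i ∈ s, ∫ x in S i, f x ∂μ ≤ M * ∫ x in T, f x ∂μ := by
  have hSi : ∀ i ∈ s, Integrable ((S i).indicator f) μ := fun i hi =>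
    (hfi.mono_set (hST i hi)).integrable_indicator (hS i hi)
  have hpointwise : ∀ x, ∑ i ∈ s, (S i).indicator f x ≤ M * T.indicator f x := by
    intro x
    by_cases hx : x ∈ T
    · simp only [Set.indicator_apply]
      rw [← Finset.sum_filter, Finset.sum_const, nsmul_eq_mul, Set.indicator_of_mem hx]
      exact mul_le_mul_of_nonneg_right (by exact_mod_cast hcard x) (hf x hx)
    · rw [Set.indicator_of_notMem hx, mul_zero]
      exact (Finset.sum_eq_zero fun i hi =>
        Set.indicator_of_notMem (fun h => hx (hST i hi h)) f).le
  calc ∑ i ∈ s, ∫ x in S i, f x ∂μ = ∫ x, ∑ i ∈ s, (S i).indicator f x ∂μ := by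
        rw [integral_finsetSum s hSi]
        exact Finset.sum_congr rfl fun i hi => (integral_indicator (hS i hi)).symm
    _ ≤ ∫ x, M * T.indicator f x ∂μ :=
        integral_mono (integrable_finsetSum s hSi) ((hfi.integrable_indicator hT).const_mul _)
          hpointwise
    _ = M * ∫ x in T, f x ∂μ := by rw [integral_const_mul, integral_indicator hT]

theorem inv_mul_le_of_mul_le {q V m c₀ κ S I M : ℝ} (hq : 0 < q) (hV : 0 < V) (hm : 0 < m)
    (hκ : 0 < κ) (hgrowth : m * V ≤ c₀ * q) (hS : κ * S ≤ M * I) (hMI : 0 ≤ M * I) :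
    q⁻¹ * S ≤ M * c₀ / (κ * m) * V⁻¹ * I := by
  have hq' : q⁻¹ ≤ c₀ / (m * V) := by
    rw [inv_le_iff_one_le_mul₀ hq, div_mul_eq_mul_div, one_le_div (by positivity)]
    linarith
  calc q⁻¹ * S ≤ q⁻¹ * (M * I / κ) := by gcongr; rwa [le_div_iff₀' hκ]
    _ ≤ c₀ / (m * V) * (M * I / κ) := by gcongr
    _ = M * c₀ / (κ * m) * V⁻¹ * I := by field_simp

theorem mul_toReal_le_of_ofReal_mul_le {m x : ℝ} {e : ℝ≥0∞} (hm : 0 < m) (he₀ : e ≠ 0)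
    (he : e ≠ ∞) (h : ENNReal.ofReal m * e ≤ ENNReal.ofReal x) : m * e.toReal ≤ x := by
  rw [← ENNReal.ofReal_toReal he, ← ENNReal.ofReal_mul hm.le, ENNReal.ofReal_le_ofReal_iff'] at h
  exact h.resolve_right (mul_pos hm (ENNReal.toReal_pos he₀ he)).not_ge

theorem isCompact_setOf_eq {X : Type*} [TopologicalSpace X] {L : X → ℝ} (hL : Continuous L)
    (hproper : ∀ t : ℝ, IsCompact {x | L x ≤ t}) (t : ℝ) : IsCompact {x | L x = t} :=
  (hproper t).of_isClosed_subset (isClosed_eq hL continuous_const) fun _ hx => hx.le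

namespace Stmt8

namespace IsLengthFun

variable {G : Type*} [Group G] {L : G → ℝ}

theorem map_mul_of_eq_zero (hL : IsLengthFun L) (g : G) {k : G} (hk : L k = 0) :
    L (g * k) = L g := by
  obtain ⟨-, -, hinv, hmul⟩ := hL
  apply le_antisymm
  · simpa [hk] using hmul g k
  · simpa [hinv, hk] using hmul (g * k) k⁻¹

/-- `L` is constant on the open cosets `g • {L = 0}`. -/
theorem continuous [TopologicalSpace G] [IsTopologicalGroup G] (hL : IsLengthFun L)
    (hopen : IsOpen {g | L g = 0}) : Continuous L := by
  refine continuous_iff_continuousAt.2 fun g => ?_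
  have hnhds : {h | L (g⁻¹ * h) = 0} ∈ 𝓝 g :=
    (hopen.preimage (continuous_const_mul g⁻¹)).mem_nhds (by simpa using hL.1)
  have hconst : (fun _ => L g) =ᶠ[𝓝 g] L := by
    filter_upwards [hnhds] with h hh
    simpa using (hL.map_mul_of_eq_zero g hh).symm
  exact continuousAt_const.congr hconst

theorem card_filter_eq_zero_le (hL : IsLengthFun L) {Λ : Subgroup G}
    (hfin : {γ : Λ | L γ = 0}.Finite) (s : Finset Λ) (g : G) :
    #(s.filter fun γ : Λ => L ((γ : G)⁻¹ * g) = 0) ≤ {γ : Λ | L γ = 0}.ncard := by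
  rcases Finset.eq_empty_or_nonempty (s.filter fun γ : Λ => L ((γ : G)⁻¹ * g) = 0) with
    hempty | ⟨γ₀, hγ₀⟩
  · simp [hempty]
  rw [← Set.ncard_coe_finset]
  refine Set.ncard_le_ncard_of_injOn (γ₀⁻¹ * ·) (fun γ hγ => ?_)
    (fun _ _ _ _ h => mul_left_cancel h) hfin
  have h₀ : L ((γ₀ : G)⁻¹ * g) = 0 := (Finset.mem_filter.1 hγ₀).2
  have h : L ((γ : G)⁻¹ * g) = 0 := (Finset.mem_filter.1 (Finset.mem_coe.1 hγ)).2
  have hinv : L ((γ : G)⁻¹ * g)⁻¹ = 0 := by rw [hL.2.2.1, h]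
  show L ((γ₀ : G)⁻¹ * γ) = 0
  simpa [mul_assoc, h₀] using hL.map_mul_of_eq_zero ((γ₀ : G)⁻¹ * g) hinv

theorem mul_sum_le_ncard_mul_setIntegral [TopologicalSpace G] [ContinuousMul G]
    [MeasurableSpace G] [BorelSpace G] {μ : Measure G} [μ.IsMulLeftInvariant]
    (hL : IsLengthFun L) (hLc : Continuous L) (hμ₀ : μ {g | L g = 0} ≠ ∞) {Λ : Subgroup G}
    (hfin : {γ : Λ | L γ = 0}.Finite) {φ : G → ℝ} {t : ℝ} (hφ : ∀ g ∈ {g | L g = t}, 0 ≤ φ g)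
    (hφi : IntegrableOn φ {g | L g = t} μ) {a : ℝ} (hφa : ∀ γ k, L k = 0 → a * φ γ ≤ φ (γ * k))
    (s : Finset Λ) (hs : ∀ γ ∈ s, L γ = t) :
    a * μ.real {g | L g = 0} * ∑ γ ∈ s, φ γ ≤
      {γ : Λ | L γ = 0}.ncard * ∫ g in {g | L g = t}, φ g ∂μ := by
  classical
  let S : Λ → Set G := fun γ => (fun g => (γ : G)⁻¹ * g) ⁻¹' {g | L g = 0}
  have hS : ∀ γ, MeasurableSet (S γ) := fun γ =>
    (isClosed_eq (hLc.comp (continuous_const_mul _)) continuous_const).measurableSet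
  have hST : ∀ γ ∈ s, S γ ⊆ {g | L g = t} := fun γ hγ g hg => by
    simpa [hs γ hγ] using hL.map_mul_of_eq_zero (γ : G) hg
  have hcoset : ∀ γ ∈ s, a * μ.real {g | L g = 0} * φ γ ≤ ∫ g in S γ, φ g ∂μ := by
    intro γ hγ
    have hμS : μ (S γ) = μ {g | L g = 0} := measure_preimage_mul μ _ _
    calc a * μ.real {g | L g = 0} * φ γ = ∫ _ in S γ, a * φ γ ∂μ := by
          rw [setIntegral_const, smul_eq_mul, measureReal_def, measureReal_def, hμS]; ring
      _ ≤ ∫ g in S γ, φ g ∂μ :=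
          setIntegral_mono_on (integrableOn_const (hμS ▸ hμ₀)) (hφi.mono_set (hST γ hγ)) (hS γ)
            fun g hg => by simpa using hφa γ _ hg
  calc a * μ.real {g | L g = 0} * ∑ γ ∈ s, φ γ = ∑ γ ∈ s, a * μ.real {g | L g = 0} * φ γ :=
        Finset.mul_sum _ _ _
    _ ≤ ∑ γ ∈ s, ∫ g in S γ, φ g ∂μ := Finset.sum_le_sum hcoset
    _ ≤ _ := sum_setIntegral_le_mul_setIntegral_of_card_le (fun γ _ => hS γ)
        (isClosed_eq hLc continuous_const).measurableSet hST
        (fun g => hL.card_filter_eq_zero_le hfin s g) hφ hφi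

end IsLengthFun

end Stmt8

section Cocycle

theorem sqrt_mul_sqrt_le_of_cocycle {G B : Type*} [Group G] [MulAction G B] {c : G → B → ℝ}
    (hc_pos : ∀ g b, 0 < c g b)
    (hc_cocycle : ∀ g₁ g₂ : G, ∀ b : B, c (g₁ * g₂) b = c g₁ (g₂ • b) * c g₂ b)
    {a : ℝ} {k : G} (hk : ∀ b, a ≤ c k b) (h : G) (b : B) :
    √a * √(c h b) ≤ √(c (k * h) b) := by
  rw [← Real.sqrt_mul' _ (hc_pos h b).le, hc_cocycle]
  exact Real.sqrt_le_sqrt (mul_le_mul_of_nonneg_right (hk _) (hc_pos h b).le)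

variable {G B : Type*} [Group G] [TopologicalSpace G] [TopologicalSpace B]
  [CompactSpace B] [MeasurableSpace B] [BorelSpace B] (ν : Measure B) [IsFiniteMeasure ν]
  {c : G → B → ℝ}

/-- The Harish-Chandra function `Ξ` of the Koopman representation on `L²(B, ν)`. -/
noncomputable def xi (c : G → B → ℝ) (g : G) : ℝ := ∫ b, √(c g⁻¹ b) ∂ν

noncomputable def koopmanRatio (c : G → B → ℝ) (b : B) (g : G) : ℝ := √(c g⁻¹ b) / xi ν c g

theorem continuous_xi [IsTopologicalGroup G] (hc : Continuous fun p : G × B => c p.1 p.2) :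
    Continuous (xi ν c) :=
  continuous_parametric_integral_of_compactSpace ν (f := fun g b => √(c g⁻¹ b)) (by fun_prop)

theorem xi_pos [NeZero ν] (hc_pos : ∀ g b, 0 < c g b)
    (hc : Continuous fun p : G × B => c p.1 p.2) (g : G) : 0 < xi ν c g := by
  have hcont : Continuous fun b => √(c g⁻¹ b) := by fun_prop
  have hsupp : Function.support (fun b => √(c g⁻¹ b)) = univ :=
    Function.support_eq_univ fun b => (Real.sqrt_pos.2 (hc_pos _ _)).ne'
  rw [xi, integral_pos_iff_support_of_nonneg (fun b => Real.sqrt_nonneg _)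
    (hcont.integrable_of_hasCompactSupport (HasCompactSupport.of_compactSpace _)), hsupp]
  exact Measure.measure_univ_pos.2 (NeZero.ne ν)

theorem koopmanRatio_nonneg [NeZero ν] (hc_pos : ∀ g b, 0 < c g b)
    (hc : Continuous fun p : G × B => c p.1 p.2) (b : B) (g : G) : 0 ≤ koopmanRatio ν c b g :=
  div_nonneg (Real.sqrt_nonneg _) (xi_pos ν hc_pos hc g).le

theorem continuous_koopmanRatio [IsTopologicalGroup G] [NeZero ν] (hc_pos : ∀ g b, 0 < c g b)
    (hc : Continuous fun p : G × B => c p.1 p.2) (b : B) : Continuous (koopmanRatio ν c b) :=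
  Continuous.div (by fun_prop) (continuous_xi ν hc) fun g => (xi_pos ν hc_pos hc g).ne'

/-- A lower bound `a` for `c` on `k` and `k⁻¹` costs a factor `a` when moving from `γ` to `γ * k`:
`√a` from the numerator and `√a` from `Ξ`. -/
theorem mul_koopmanRatio_le_mul [MulAction G B] [NeZero ν] (hc_pos : ∀ g b, 0 < c g b)
    (hc : Continuous fun p : G × B => c p.1 p.2)
    (hc_cocycle : ∀ g₁ g₂ : G, ∀ b : B, c (g₁ * g₂) b = c g₁ (g₂ • b) * c g₂ b)
    {a : ℝ} (ha : 0 ≤ a) {k : G} (hk : ∀ b, a ≤ c k b) (hk' : ∀ b, a ≤ c k⁻¹ b) (γ : G) (b : B) :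
    a * koopmanRatio ν c b γ ≤ koopmanRatio ν c b (γ * k) := by
  have hint : ∀ g : G, Integrable (fun b => √(c g b)) ν := fun g =>
    Continuous.integrable_of_hasCompactSupport (by fun_prop) (HasCompactSupport.of_compactSpace _)
  have hnum : √a * √(c γ⁻¹ b) ≤ √(c (γ * k)⁻¹ b) := by
    simpa [mul_inv_rev] using sqrt_mul_sqrt_le_of_cocycle hc_pos hc_cocycle hk' γ⁻¹ b
  have hden : √a * xi ν c (γ * k) ≤ xi ν c γ := by
    rw [xi, xi, ← integral_const_mul]
    refine integral_mono ((hint _).const_mul _) (hint _) fun b => ?_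
    simpa [mul_inv_rev, mul_assoc] using
      sqrt_mul_sqrt_le_of_cocycle hc_pos hc_cocycle hk (γ * k)⁻¹ b
  rw [koopmanRatio, koopmanRatio, ← mul_div_assoc,
    div_le_div_iff₀ (xi_pos ν hc_pos hc γ) (xi_pos ν hc_pos hc _)]
  calc a * √(c γ⁻¹ b) * xi ν c (γ * k) = (√a * √a) * √(c γ⁻¹ b) * xi ν c (γ * k) := by
        rw [Real.mul_self_sqrt ha]
    _ = (√a * √(c γ⁻¹ b)) * (√a * xi ν c (γ * k)) := by ring
    _ ≤ √(c (γ * k)⁻¹ b) * xi ν c γ := mul_le_mul hnum hden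
        (mul_nonneg (Real.sqrt_nonneg _) (xi_pos ν hc_pos hc _).le) (Real.sqrt_nonneg _)

end Cocycle

theorem statement8
    {G : Type*} [Group G] [TopologicalSpace G] [IsTopologicalGroup G]
    [MeasurableSpace G] [BorelSpace G]
    (μG : Measure G) [μG.IsHaarMeasure]
    (𝓛 : G → ℝ) (hlen : Stmt8.IsLengthFun 𝓛)
    (hproper : ∀ t : ℝ, IsCompact {g : G | 𝓛 g ≤ t})
    (hG0_open : IsOpen {g : G | 𝓛 g = 0})
    {B : Type*} [TopologicalSpace B] [CompactSpace B]
    [MeasurableSpace B] [BorelSpace B]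
    (ν : Measure B) [IsProbabilityMeasure ν]
    [MulAction G B]
    (c : G → B → ℝ) (hc_pos : ∀ g b, 0 < c g b)
    (hc_cont : Continuous fun p : G × B => c p.1 p.2)
    (hc_cocycle : ∀ g₁ g₂ : G, ∀ b : B, c (g₁ * g₂) b = c g₁ (g₂ • b) * c g₂ b)
    (Ξ : G → ℝ) (hΞ : ∀ g : G, Ξ g = ∫ b, Real.sqrt (c g⁻¹ b) ∂ν)
    (Λ : Subgroup G)
    (hfin : ∀ n : ℕ, {γ : Λ | 𝓛 (γ : G) = n}.Finite)
    (c₀ : ℝ) (m : ℝ) (hm : 0 < m)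
    (hgrowth : ∃ N : ℕ, ∀ n : ℕ, N ≤ n →
      ENNReal.ofReal m * μG {g : G | 𝓛 g = n} ≤
        ENNReal.ofReal (c₀ * ((hfin n).toFinset.card : ℝ))) :
    ∃ (C : ℝ) (N : ℕ), ∀ n : ℕ, N ≤ n →
      ((hfin n).toFinset).Nonempty →
      0 < μG {g : G | 𝓛 g = n} → μG {g : G | 𝓛 g = n} < ⊤ →
      ∀ b : B,
        0 ≤ (((hfin n).toFinset.card : ℝ))⁻¹ *
              ∑ γ ∈ (hfin n).toFinset, Real.sqrt (c ((γ : G))⁻¹ b) / Ξ (γ : G) ∧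
        (((hfin n).toFinset.card : ℝ))⁻¹ *
              ∑ γ ∈ (hfin n).toFinset, Real.sqrt (c ((γ : G))⁻¹ b) / Ξ (γ : G) ≤
          C * ((μG {g : G | 𝓛 g = n}).toReal)⁻¹ *
            ∫ g in {g : G | 𝓛 g = n}, Real.sqrt (c g⁻¹ b) / Ξ g ∂μG := by
  obtain rfl : Ξ = xi ν c := funext hΞ
  obtain ⟨N, hN⟩ := hgrowth
  have hLc := hlen.continuous hG0_open
  have hG₀ := isCompact_setOf_eq hLc hproper 0
  obtain ⟨a, ha, hca⟩ := (hG₀.prod isCompact_univ).exists_forall_le' hc_cont.continuousOn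
    fun p _ => hc_pos p.1 p.2
  have hsphere : ∀ t : ℝ, MeasurableSet {g | 𝓛 g = t} := fun t =>
    (isClosed_eq hLc continuous_const).measurableSet
  have hμG₀ : 0 < μG.real {g | 𝓛 g = 0} :=
    ENNReal.toReal_pos (hG0_open.measure_pos μG ⟨1, hlen.1⟩).ne' hG₀.measure_lt_top.ne
  refine ⟨{γ : Λ | 𝓛 γ = 0}.ncard * c₀ / (a * μG.real {g | 𝓛 g = 0} * m), N,
    fun n hn hne hpos hlt b => ⟨mul_nonneg (by positivity)
      (Finset.sum_nonneg fun γ _ => koopmanRatio_nonneg ν hc_pos hc_cont b γ), ?_⟩⟩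
  have hsum := hlen.mul_sum_le_ncard_mul_setIntegral hLc hG₀.measure_lt_top.ne
    (by simpa using hfin 0) (fun g _ => koopmanRatio_nonneg ν hc_pos hc_cont b g)
    ((continuous_koopmanRatio ν hc_pos hc_cont b).continuousOn.integrableOn_compact' (μ := μG)
      (isCompact_setOf_eq hLc hproper n) (hsphere n))
    (fun γ k hk => mul_koopmanRatio_le_mul ν hc_pos hc_cont hc_cocycle ha.le
      (fun b => hca (k, b) ⟨hk, trivial⟩)
      (fun b => hca (k⁻¹, b) ⟨(hlen.2.2.1 k).trans hk, trivial⟩) γ b)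
    (hfin n).toFinset fun γ hγ => (hfin n).mem_toFinset.1 hγ
  exact inv_mul_le_of_mul_le (by exact_mod_cast hne.card_pos)
    (ENNReal.toReal_pos hpos.ne' hlt.ne) hm (mul_pos ha hμG₀)
    (mul_toReal_le_of_ofReal_mul_le hm hpos.ne' hlt.ne (hN n hn)) hsum
    (mul_nonneg (Nat.cast_nonneg _)
      (setIntegral_nonneg (hsphere n) fun g _ => koopmanRatio_nonneg ν hc_pos hc_cont b g))
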